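/- Consider the random walk on {0,…,L} started at s0, with i.i.d. steps equal to +1 with probability p and −1 with probability 1−p. Fix an integer t ≥ 1 and s ∈ {0, L} with s − s0 + t even, and set r = (s − s0 + t)/2. Then the probability that the walk stays in {1,…,L−1} at all times k < t and satisfies X_t = s equals (1−p)^{t−r} p^{r} · Σ_{k∈ℤ} [C(t−1, r′+kL) − C(t−1, r′+s0+kL)], where r′ = r if s = 0 and r′ = r−1 if s = L. -/

import Mathlib

/-!
Conditioning on the last step, which is independent of the past, the probability that the walk
stays in `(0, L)` up to time `n` and has made `j` up-steps satisfies
`u (n + 1) j = p · u n (j - 1) + (1 - p) · u n j` inside the strip and vanishes on its boundary.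
The method-of-images sum, multiplied by `p ^ j (1 - p) ^ (n - j)`, satisfies the same recursion
(Pascal's rule), vanishes whenever the endpoint is a multiple of `L`, and has the right initial
value; so the two agree. Exiting at `s ∈ {0, L}` at time `t` means being confined up to time
`t - 1` next to `s` and stepping out.
-/

open MeasureTheory ProbabilityTheory
open scoped Classical

/-- Binomial coefficient `C(n,k)` with integer lower index `k`, equal to `0`
unless `0 ≤ k ≤ n`. -/
def Cb (n : ℕ) (k : ℤ) : ℤ := if 0 ≤ k ∧ k ≤ (n : ℤ) then (n.choose k.toNat : ℤ) else 0

lemma Cb_natCast (n m : ℕ) : Cb n m = n.choose m := by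
  unfold Cb
  split_ifs with h
  · simp
  · rw [Nat.choose_eq_zero_of_lt (by omega), Nat.cast_zero]

lemma Cb_of_neg (n : ℕ) {k : ℤ} (hk : k < 0) : Cb n k = 0 :=
  if_neg fun h => (h.1.not_gt hk)

lemma Cb_of_notMem_Icc {n : ℕ} {k : ℤ} (hk : k ∉ Set.Icc 0 (n : ℤ)) : Cb n k = 0 :=
  if_neg hk

lemma Cb_zero_left (k : ℤ) : Cb 0 k = if k = 0 then 1 else 0 := by
  rcases lt_or_ge k 0 with hk | hk
  · rw [Cb_of_neg 0 hk, if_neg hk.ne]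
  · lift k to ℕ using hk
    rw [Cb_natCast]
    cases k <;> simp only [Nat.choose_self, Nat.choose_zero_succ] <;> norm_cast

lemma Cb_succ (n : ℕ) (k : ℤ) : Cb (n + 1) k = Cb n k + Cb n (k - 1) := by
  rcases lt_or_ge k 0 with hk | hk
  · simp [Cb_of_neg _ hk, Cb_of_neg _ (show k - 1 < 0 by omega)]
  · lift k to ℕ using hk
    cases k with
    | zero =>
      rw [Cb_natCast, Cb_natCast, Nat.cast_zero, zero_sub, Cb_of_neg n (by norm_num), add_zero,
        Nat.choose_zero_right, Nat.choose_zero_right]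
    | succ m =>
      rw [Nat.cast_succ, add_sub_cancel_right, ← Nat.cast_succ, Cb_natCast, Cb_natCast,
        Cb_natCast, Nat.choose_succ_succ', Nat.cast_add, add_comm]

lemma Cb_symm (n : ℕ) (k : ℤ) : Cb n k = Cb n (n - k) := by
  rcases lt_or_ge k 0 with hk | hk
  · rw [Cb_of_neg n hk, Cb_of_notMem_Icc (by simp; omega)]
  · lift k to ℕ using hk
    rcases le_or_gt k n with hkn | hkn
    · rw [← Nat.cast_sub hkn, Cb_natCast, Cb_natCast, Nat.choose_symm hkn]
    · rw [Cb_natCast, Nat.choose_eq_zero_of_lt hkn, Cb_of_neg n (by omega), Nat.cast_zero]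

lemma summable_Cb {L : ℕ} (hL : L ≠ 0) (n : ℕ) (m : ℤ) :
    Summable fun k : ℤ => (Cb n (m + k * L) : ℝ) := by
  have hinj : Function.Injective fun k : ℤ => m + k * L :=
    (add_right_injective m).comp (mul_left_injective₀ (by exact_mod_cast hL))
  refine summable_of_hasFiniteSupport <|
    ((Set.finite_Icc (0 : ℤ) n).preimage hinj.injOn).subset fun k hk => ?_
  by_contra h
  exact hk (by simp only [Cb_of_notMem_Icc h, Int.cast_zero])

-- Method of images: the signed count of `n`-step paths from `s0` with `j` up-steps that stay
-- strictly between `0` and `L`.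
noncomputable def imageSum (L : ℕ) (s0 : ℤ) (n : ℕ) (j : ℤ) : ℝ :=
  ∑' k : ℤ, ((Cb n (j + k * L) : ℝ) - (Cb n (j + s0 + k * L) : ℝ))

section imageSum

variable {L : ℕ} {s0 : ℤ}

lemma imageSum_eq_zero_of_dvd (hL : L ≠ 0) {n : ℕ} {j : ℤ} (h : (L : ℤ) ∣ s0 + 2 * j - n) :
    imageSum L s0 n j = 0 := by
  obtain ⟨a, ha⟩ := h
  -- `Cb_symm` sends the image `j + k * L` to the image `j + s0 + (-a - k) * L` of the other family.
  have hreflect : ∀ k : ℤ,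
      (Cb n (j + k * L) : ℝ) = Cb n (j + s0 + Equiv.subLeft (-a) k * L) := fun k => by
    rw [Cb_symm, Equiv.subLeft_apply]
    congr 2
    linear_combination -ha
  rw [imageSum, Summable.tsum_sub (summable_Cb hL n j) (summable_Cb hL n (j + s0)), sub_eq_zero,
    tsum_congr hreflect]
  exact (Equiv.subLeft (-a)).tsum_eq fun k : ℤ => (Cb n (j + s0 + k * L) : ℝ)

lemma imageSum_succ (hL : L ≠ 0) (n : ℕ) (j : ℤ) :
    imageSum L s0 (n + 1) j = imageSum L s0 n (j - 1) + imageSum L s0 n j := by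
  have hsummable (i : ℤ) :
      Summable fun k : ℤ => (Cb n (i + k * L) : ℝ) - (Cb n (i + s0 + k * L) : ℝ) :=
    (summable_Cb hL n i).sub (summable_Cb hL n (i + s0))
  rw [imageSum, imageSum, imageSum, ← (hsummable (j - 1)).tsum_add (hsummable j)]
  refine tsum_congr fun k => ?_
  rw [Cb_succ, Cb_succ]
  push_cast
  ring_nf

lemma imageSum_zero (hs0 : 0 < s0) (hs0L : s0 < L) {j : ℤ} (hj0 : 0 ≤ s0 + 2 * j)
    (hjL : s0 + 2 * j ≤ L) : imageSum L s0 0 j = if j = 0 then 1 else 0 := by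
  have hfar {k : ℤ} (hk : k ≠ 0) : (L : ℤ) ≤ k * L ∨ k * L ≤ -L := by
    rcases hk.lt_or_gt with hk | hk
    · right; nlinarith
    · left; nlinarith
  rw [imageSum, tsum_eq_single 0 fun k hk => ?_]
  · rw [zero_mul, add_zero, add_zero, Cb_zero_left, Cb_zero_left, if_neg (show j + s0 ≠ 0 by omega)]
    split_ifs <;> simp
  · have := hfar hk
    generalize k * (L : ℤ) = m at this ⊢
    rw [Cb_zero_left, Cb_zero_left, if_neg (by omega), if_neg (by omega), sub_self]

end imageSum

lemma measure_eq_inter_add_inter {Ω : Type*} [MeasurableSpace Ω] {μ : Measure Ω} {U D : Set Ω}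
    (hU : MeasurableSet U) (hD : MeasurableSet D) (hUD : Disjoint U D) (hcover : μ (U ∪ D)ᶜ = 0)
    (B : Set Ω) : μ B = μ (B ∩ U) + μ (B ∩ D) := by
  have hBD : B \ U ∩ D = B ∩ D := by
    ext ω
    simp only [Set.mem_inter_iff, Set.mem_sdiff]
    exact ⟨fun h => ⟨h.1.1, h.2⟩, fun h => ⟨⟨h.1, Set.disjoint_right.1 hUD h.2⟩, h.2⟩⟩
  have hnull : μ ((B \ U) \ D) = 0 :=
    measure_mono_null (fun ω hω => by simp only [Set.mem_sdiff] at hω; simp [hω.1.2, hω.2]) hcover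
  rw [← measure_inter_add_sdiff B hU, ← measure_inter_add_sdiff (B \ U) hD, hBD, hnull, add_zero]

section Walk

variable {Ω : Type*}

def walk (s0 : ℤ) (ξ : ℕ → Ω → ℤ) (k : ℕ) (ω : Ω) : ℤ := s0 + ∑ i ∈ Finset.range k, ξ i ω

def confinedUpTo (S : Set ℤ) (s0 : ℤ) (ξ : ℕ → Ω → ℤ) (n : ℕ) (b : ℤ) : Set Ω :=
  {ω | (∀ k ≤ n, walk s0 ξ k ω ∈ S) ∧ walk s0 ξ n ω = b}

def confinedBefore (S : Set ℤ) (s0 : ℤ) (ξ : ℕ → Ω → ℤ) (n : ℕ) (b : ℤ) : Set Ω :=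
  {ω | (∀ k < n, walk s0 ξ k ω ∈ S) ∧ walk s0 ξ n ω = b}

variable {S : Set ℤ} {s0 : ℤ} {ξ : ℕ → Ω → ℤ}

lemma walk_succ (k : ℕ) (ω : Ω) : walk s0 ξ (k + 1) ω = walk s0 ξ k ω + ξ k ω := by
  rw [walk, walk, Finset.sum_range_succ, add_assoc]

lemma confinedUpTo_zero (hs0 : s0 ∈ S) (b : ℤ) : confinedUpTo S s0 ξ 0 b = {_ω | s0 = b} := by
  ext ω
  simp [confinedUpTo, walk, hs0]

lemma confinedUpTo_of_notMem {b : ℤ} (hb : b ∉ S) (n : ℕ) : confinedUpTo S s0 ξ n b = ∅ :=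
  Set.eq_empty_of_forall_notMem fun _ ⟨hS, hn⟩ => hb (hn ▸ hS n le_rfl)

lemma confinedUpTo_of_mem {b : ℤ} (hb : b ∈ S) (n : ℕ) :
    confinedUpTo S s0 ξ n b = confinedBefore S s0 ξ n b := by
  ext ω
  refine ⟨fun ⟨hS, hn⟩ => ⟨fun k hk => hS k hk.le, hn⟩, fun ⟨hS, hn⟩ => ⟨fun k hk => ?_, hn⟩⟩
  rcases hk.lt_or_eq with hk | rfl
  exacts [hS k hk, hn ▸ hb]

lemma confinedBefore_succ_inter (n : ℕ) (b c : ℤ) :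
    confinedBefore S s0 ξ (n + 1) b ∩ {ω | ξ n ω = c} =
      confinedUpTo S s0 ξ n (b - c) ∩ {ω | ξ n ω = c} := by
  ext ω
  simp only [confinedBefore, confinedUpTo, Set.mem_inter_iff, Set.mem_ofPred_eq, Nat.lt_succ_iff,
    walk_succ]
  constructor <;> rintro ⟨⟨hS, hb⟩, hc⟩ <;> exact ⟨⟨hS, by omega⟩, hc⟩

lemma measurableSet_confinedUpTo (n : ℕ) (b : ℤ) :
    MeasurableSet[⨆ i ∈ Set.Iio n, MeasurableSpace.comap (ξ i) inferInstance]
      (confinedUpTo S s0 ξ n b) := by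
  have hwalk (k : ℕ) (hk : k ≤ n) :
      Measurable[⨆ i ∈ Set.Iio n, MeasurableSpace.comap (ξ i) inferInstance] (walk s0 ξ k) := by
    refine (Finset.measurable_sum _ fun i hi => Measurable.of_comap_le ?_).const_add s0
    exact le_iSup₂ (f := fun i (_ : i ∈ Set.Iio n) => MeasurableSpace.comap (ξ i) inferInstance) i
      (by simp at hi ⊢; omega)
  have hset : confinedUpTo S s0 ξ n b =
      (⋂ k ∈ Set.Iic n, walk s0 ξ k ⁻¹' S) ∩ walk s0 ξ n ⁻¹' {b} := by
    ext ω
    simp [confinedUpTo]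
  rw [hset]
  exact (MeasurableSet.biInter (Set.to_countable _) fun k hk => hwalk k hk trivial).inter
    (hwalk n le_rfl trivial)

end Walk

section Probability

variable {Ω : Type*} [MeasurableSpace Ω] {P : Measure Ω} {S : Set ℤ} {s0 : ℤ} {ξ : ℕ → Ω → ℤ}

lemma measure_confinedUpTo_inter (hmeas : ∀ i, Measurable (ξ i)) (hindep : iIndepFun ξ P)
    (n : ℕ) (b c : ℤ) :
    P (confinedUpTo S s0 ξ n b ∩ {ω | ξ n ω = c}) =
      P (confinedUpTo S s0 ξ n b) * P {ω | ξ n ω = c} := by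
  have hpast_future := indep_iSup_of_disjoint (fun i => (hmeas i).comap_le)
    ((iIndepFun_iff_iIndep _ _ _).1 hindep) (S := Set.Iio n) (T := {n}) (by simp)
  refine (Indep_iff _ _ _).1 hpast_future _ _ (measurableSet_confinedUpTo n b) ?_
  exact le_iSup₂ (f := fun i (_ : i ∈ ({n} : Set ℕ)) => MeasurableSpace.comap (ξ i) inferInstance)
    n rfl _ ⟨{c}, measurableSet_singleton c, rfl⟩

variable [IsProbabilityMeasure P] {p : ℝ} {L : ℕ}

lemma measureReal_confinedBefore_succ (hp0 : 0 ≤ p) (hp1 : p ≤ 1)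
    (hmeas : ∀ i, Measurable (ξ i)) (hindep : iIndepFun ξ P)
    (hplus : ∀ i, P {ω | ξ i ω = 1} = ENNReal.ofReal p)
    (hminus : ∀ i, P {ω | ξ i ω = -1} = ENNReal.ofReal (1 - p)) (n : ℕ) (b : ℤ) :
    P.real (confinedBefore S s0 ξ (n + 1) b) =
      p * P.real (confinedUpTo S s0 ξ n (b - 1)) +
        (1 - p) * P.real (confinedUpTo S s0 ξ n (b + 1)) := by
  have hup : MeasurableSet {ω | ξ n ω = 1} := hmeas n (measurableSet_singleton 1)
  have hdown : MeasurableSet {ω | ξ n ω = -1} := hmeas n (measurableSet_singleton (-1))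
  have hdisj : Disjoint {ω | ξ n ω = 1} {ω | ξ n ω = -1} :=
    Set.disjoint_left.2 fun ω h1 h2 => by simp_all
  have hcover : P ({ω | ξ n ω = 1} ∪ {ω | ξ n ω = -1})ᶜ = 0 := by
    rw [prob_compl_eq_zero_iff (hup.union hdown), measure_union hdisj hdown, hplus, hminus,
      ← ENNReal.ofReal_add hp0 (by linarith), add_sub_cancel, ENNReal.ofReal_one]
  rw [measureReal_def, measure_eq_inter_add_inter hup hdown hdisj hcover,
    confinedBefore_succ_inter, confinedBefore_succ_inter, measure_confinedUpTo_inter hmeas hindep,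
    measure_confinedUpTo_inter hmeas hindep, hplus, hminus, sub_neg_eq_add,
    ENNReal.toReal_add (by finiteness) (by finiteness), ENNReal.toReal_mul, ENNReal.toReal_mul,
    ENNReal.toReal_ofReal hp0, ENNReal.toReal_ofReal (by linarith), measureReal_def,
    measureReal_def, mul_comm p, mul_comm (1 - p)]

lemma measureReal_confinedUpTo_Ioo (hs0 : 0 < s0) (hs0L : s0 < L) (hp0 : 0 < p) (hp1 : p < 1)
    (hmeas : ∀ i, Measurable (ξ i)) (hindep : iIndepFun ξ P)
    (hplus : ∀ i, P {ω | ξ i ω = 1} = ENNReal.ofReal p)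
    (hminus : ∀ i, P {ω | ξ i ω = -1} = ENNReal.ofReal (1 - p)) (n : ℕ) {j : ℤ}
    (hj0 : 0 ≤ s0 + 2 * j - n) (hjL : s0 + 2 * j - n ≤ L) :
    P.real (confinedUpTo (Set.Ioo 0 L) s0 ξ n (s0 + 2 * j - n)) =
      p ^ j * (1 - p) ^ ((n : ℤ) - j) * imageSum L s0 n j := by
  have hL : L ≠ 0 := by omega
  induction n generalizing j with
  | zero =>
    rw [confinedUpTo_zero (show s0 ∈ Set.Ioo 0 (L : ℤ) from ⟨hs0, hs0L⟩),
      imageSum_zero hs0 hs0L (by omega) (by omega)]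
    by_cases hj : j = 0 <;> simp [hj]
  | succ n ih =>
    by_cases hb : s0 + 2 * j - (n + 1 : ℕ) ∈ Set.Ioo (0 : ℤ) L
    · rw [confinedUpTo_of_mem hb, measureReal_confinedBefore_succ hp0.le hp1.le hmeas hindep hplus
        hminus, imageSum_succ hL]
      have hprev : s0 + 2 * j - (n + 1 : ℕ) - 1 = s0 + 2 * (j - 1) - n := by push_cast; ring
      have hnext : s0 + 2 * j - (n + 1 : ℕ) + 1 = s0 + 2 * j - n := by push_cast; ring
      obtain ⟨hb0, hbL⟩ := hb
      rw [hprev, hnext, ih (by omega) (by omega), ih (by omega) (by omega)]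
      have hq : 1 - p ≠ 0 := by linarith
      rw [show p ^ j = p ^ (j - 1) * p by rw [← zpow_add_one₀ hp0.ne', sub_add_cancel],
        show (n : ℤ) - (j - 1) = n - j + 1 by ring,
        show ((n + 1 : ℕ) : ℤ) - j = n - j + 1 by push_cast; ring,
        zpow_add_one₀ hq]
      ring
    · have hdvd : (L : ℤ) ∣ s0 + 2 * j - (n + 1 : ℕ) := by
        rw [Set.mem_Ioo, not_and_or, not_lt, not_lt] at hb
        rcases hb with hb | hb
        · rw [show s0 + 2 * j - (n + 1 : ℕ) = 0 by omega]
          exact dvd_zero _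
        · rw [show s0 + 2 * j - (n + 1 : ℕ) = L by omega]
      rw [confinedUpTo_of_notMem hb, imageSum_eq_zero_of_dvd hL hdvd]
      simp

end Probability

theorem stmt_1_general {Ω : Type*} [MeasurableSpace Ω] (P : Measure Ω) [IsProbabilityMeasure P]
    (L : ℕ) (s0 : ℤ) (hs0 : 0 < s0) (hs0L : s0 < (L : ℤ))
    (p : ℝ) (hp0 : 0 < p) (hp1 : p < 1)
    (ξ : ℕ → Ω → ℤ) (hmeas : ∀ i, Measurable (ξ i))
    (hindep : iIndepFun ξ P)
    (hplus : ∀ i, P {ω | ξ i ω = 1} = ENNReal.ofReal p)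
    (hminus : ∀ i, P {ω | ξ i ω = -1} = ENNReal.ofReal (1 - p))
    (X : ℕ → Ω → ℤ) (hX : ∀ k ω, X k ω = s0 + ∑ i ∈ Finset.range k, ξ i ω)
    (t : ℕ) (ht : 1 ≤ t) (s : ℤ) (hs : s = 0 ∨ s = (L : ℤ))
    (hpar : (2 : ℤ) ∣ (s - s0 + t))
    (r : ℤ) (hr : r = (s - s0 + t) / 2)
    (r' : ℤ) (hr' : r' = if s = 0 then r else r - 1) :
    P {ω | (∀ k < t, 0 < X k ω ∧ X k ω < (L : ℤ)) ∧ X t ω = s}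
      = ENNReal.ofReal ((1 - p) ^ ((t : ℤ) - r) * p ^ r *
          ∑' k : ℤ, ((Cb (t - 1) (r' + k * L) : ℝ) - (Cb (t - 1) (r' + s0 + k * L) : ℝ))) := by
  obtain rfl : X = walk s0 ξ := funext fun k => funext (hX k)
  obtain ⟨n, rfl⟩ : ∃ n, t = n + 1 := ⟨t - 1, by omega⟩
  change P (confinedBefore (Set.Ioo 0 L) s0 ξ (n + 1) s) = ENNReal.ofReal (_ * imageSum L s0 n r')
  rw [← ofReal_measureReal,
    measureReal_confinedBefore_succ hp0.le hp1.le hmeas hindep hplus hminus]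
  congr 1
  rcases hs with rfl | rfl
  · obtain rfl : r' = r := by simpa using hr'
    have hq : 1 - p ≠ 0 := by linarith
    rw [confinedUpTo_of_notMem (show (0 : ℤ) - 1 ∉ Set.Ioo 0 (L : ℤ) by simp), measureReal_empty,
      mul_zero, zero_add, show (0 : ℤ) + 1 = s0 + 2 * r' - n by omega,
      measureReal_confinedUpTo_Ioo hs0 hs0L hp0 hp1 hmeas hindep hplus hminus n (by omega)
        (by omega),
      show ((n + 1 : ℕ) : ℤ) - r' = n - r' + 1 by push_cast; ring, zpow_add_one₀ hq]
    ring
  · obtain rfl : r = r' + 1 := by simp at hr'; omega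
    rw [confinedUpTo_of_notMem (show (L : ℤ) + 1 ∉ Set.Ioo 0 (L : ℤ) by simp), measureReal_empty,
      mul_zero, add_zero, show (L : ℤ) - 1 = s0 + 2 * r' - n by omega,
      measureReal_confinedUpTo_Ioo hs0 hs0L hp0 hp1 hmeas hindep hplus hminus n (by omega)
        (by omega),
      show ((n + 1 : ℕ) : ℤ) - (r' + 1) = n - r' by push_cast; ring, zpow_add_one₀ hp0.ne']
    ring

/-- For the ±1 random walk on `{0,…,L}` started at `s0`, the probability
of staying in the interior `{1,…,L-1}` at all times `k < t` and being at `s ∈ {0,L}` at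
time `t` is `(1-p)^(t-r) p^r` times the method-of-images path count. -/
theorem stmt_1 {Ω : Type*} [MeasurableSpace Ω] (P : Measure Ω) [IsProbabilityMeasure P]
    (L : ℕ) (hL : 2 ≤ L) (s0 : ℤ) (hs0 : 0 < s0) (hs0L : s0 < (L : ℤ))
    (p : ℝ) (hp0 : 0 < p) (hp1 : p < 1)
    (ξ : ℕ → Ω → ℤ) (hmeas : ∀ i, Measurable (ξ i))
    (hindep : iIndepFun ξ P)
    (hplus : ∀ i, P {ω | ξ i ω = 1} = ENNReal.ofReal p)
    (hminus : ∀ i, P {ω | ξ i ω = -1} = ENNReal.ofReal (1 - p))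
    (X : ℕ → Ω → ℤ) (hX : ∀ k ω, X k ω = s0 + ∑ i ∈ Finset.range k, ξ i ω)
    (t : ℕ) (ht : 1 ≤ t) (s : ℤ) (hs : s = 0 ∨ s = (L : ℤ))
    (hpar : (2 : ℤ) ∣ (s - s0 + t))
    (r : ℤ) (hr : r = (s - s0 + t) / 2)
    (r' : ℤ) (hr' : r' = if s = 0 then r else r - 1) :
    P {ω | (∀ k < t, 0 < X k ω ∧ X k ω < (L : ℤ)) ∧ X t ω = s}
      = ENNReal.ofReal ((1 - p) ^ ((t : ℤ) - r) * p ^ r *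
          ∑' k : ℤ, ((Cb (t - 1) (r' + k * L) : ℝ) - (Cb (t - 1) (r' + s0 + k * L) : ℝ))) :=
  stmt_1_general P L s0 hs0 hs0L p hp0 hp1 ξ hmeas hindep hplus hminus X hX t ht s hs hpar r hr r'
    hr'
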